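/- Let M_d be the set of monomials of degree d in K[x_1,...,x_n], v ∈ M_d, and I = (u ∈ M_d : u ≥_lex v) the initial lexsegment ideal determined by v. If I has linear quotients with respect to the reverse lexicographical ordering of the minimal generators induced by every ordering of the variables, then I is polymatroidal. -/
import Mathlib


/-- A monomial in `n` variables, given by its exponent vector. -/
abbrev Mon (n : ℕ) := Fin n → ℕ

/-- Total degree of a monomial. -/
def mdeg {n : ℕ} (u : Mon n) : ℕ := ∑ i, u i

/-- The exponent vector of `x_j * (u / x_i)`. -/
def exch {n : ℕ} (u : Mon n) (i j : Fin n) : Mon n :=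
  fun l => u l - (if l = i then 1 else 0) + (if l = j then 1 else 0)

/-- Membership of the monomial `w` in the monomial ideal generated by the set `G`. -/
def memI {n : ℕ} (G : Set (Mon n)) (w : Mon n) : Prop :=
  ∃ u ∈ G, ∀ l, u l ≤ w l

/-- `G` (the set of minimal generators, all of one degree) is polymatroidal: the
exchange property holds. -/
def IsPolymatroidal {n : ℕ} (G : Set (Mon n)) : Prop :=
  ∀ u ∈ G, ∀ v ∈ G, ∀ i, v i < u i → ∃ j, u j < v j ∧ memI G (exch u i j)

/-- The (strict) lexicographic order on monomials of a common degree, induced by the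
variable ordering `x_{σ 0} > x_{σ 1} > ⋯ > x_{σ (n-1)}`. -/
def lexGT {n : ℕ} (σ : Fin n → Fin n) (u v : Mon n) : Prop :=
  ∃ i, v (σ i) < u (σ i) ∧ ∀ k, k < i → u (σ k) = v (σ k)

/-- `u ≥_lex v` with respect to the variable ordering given by `σ`. -/
def lexGE {n : ℕ} (σ : Fin n → Fin n) (u v : Mon n) : Prop :=
  u = v ∨ lexGT σ u v

/-- The (strict) reverse lexicographic order on monomials of a common degree, induced by
the variable ordering `x_{σ 0} > x_{σ 1} > ⋯ > x_{σ (n-1)}`. -/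
def rlexGT {n : ℕ} (σ : Fin n → Fin n) (u v : Mon n) : Prop :=
  ∃ i, u (σ i) < v (σ i) ∧ ∀ k, i < k → u (σ k) = v (σ k)

/-- `G` has linear quotients with respect to the order `gt`: for every `u ∈ G` the colon
ideal `(v ∈ G : gt v u) : u` is generated by variables, i.e. for every `v ∈ G` with
`gt v u` there is a variable `x_i` dividing `v : u` with `x_i·u` in the ideal generated
by the `gt`-larger generators. -/
def LinQuot {n : ℕ} (G : Set (Mon n)) (gt : Mon n → Mon n → Prop) : Prop :=
  ∀ u ∈ G, ∀ v ∈ G, gt v u →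
    ∃ i, u i < v i ∧
      ∃ w ∈ G, gt w u ∧ ∀ l, w l ≤ u l + (if l = i then 1 else 0)

section Helpers

lemma exch_apply {N : ℕ} (u : Mon N) (i j l : Fin N) :
    exch u i j l = u l - (if l = i then 1 else 0) + (if l = j then 1 else 0) := rfl

lemma exch_at_i {N : ℕ} (u : Mon N) {i j : Fin N} (h : i ≠ j) :
    exch u i j i = u i - 1 := by simp [exch_apply, h]

lemma exch_at_j {N : ℕ} (u : Mon N) {i j : Fin N} (h : i ≠ j) :
    exch u i j j = u j + 1 := by simp [exch_apply, Ne.symm h]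

lemma exch_at_other {N : ℕ} (u : Mon N) {i j l : Fin N} (h1 : l ≠ i) (h2 : l ≠ j) :
    exch u i j l = u l := by simp [exch_apply, h1, h2]

lemma sum_shift2 {N : ℕ} (x y : Mon N) (a a' b b' : Fin N) (ca ca' cb cb' : ℕ)
    (h : ∀ l, x l + (if l = a then ca else 0) + (if l = a' then ca' else 0)
            = y l + (if l = b then cb else 0) + (if l = b' then cb' else 0)) :
    mdeg x + ca + ca' = mdeg y + cb + cb' := by
  have := Finset.sum_congr rfl (fun l (_ : l ∈ Finset.univ) => h l)
  rw [Finset.sum_add_distrib, Finset.sum_add_distrib, Finset.sum_add_distrib,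
    Finset.sum_add_distrib] at this
  simpa [mdeg] using this

lemma exists_gt_of_mdeg_eq {N : ℕ} {a b : Mon N} (h : mdeg a = mdeg b)
    {i : Fin N} (hi : b i < a i) : ∃ j, a j < b j := by
  by_contra hc
  push_neg at hc
  have : mdeg b < mdeg a :=
    Finset.sum_lt_sum (fun l _ => hc l) ⟨i, Finset.mem_univ i, hi⟩
  omega

lemma exists_min {N : ℕ} (P : Fin N → Prop) (h : ∃ l, P l) :
    ∃ m, P m ∧ ∀ l, l < m → ¬ P l := by
  classical
  obtain ⟨l, hl⟩ := h
  obtain ⟨m, hm, hmin⟩ := Finset.exists_min_image (Finset.univ.filter P) id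
    ⟨l, by simp [hl]⟩
  refine ⟨m, (Finset.mem_filter.1 hm).2, fun l' hl' hPl' => ?_⟩
  exact absurd (hmin l' (by simp [hPl'])) (by simpa using hl')

lemma mdeg_exch {N : ℕ} (u : Mon N) (i j : Fin N) (hij : i ≠ j) (hi : 1 ≤ u i) :
    mdeg (exch u i j) = mdeg u := by
  have h := sum_shift2 (exch u i j) u i i j j 1 0 1 0 (fun l => by
    by_cases h1 : l = i <;> by_cases h2 : l = j <;>
      simp [exch_apply, h1, h2, hij, Ne.symm hij] <;> omega)
  omega

lemma part1 {n d : ℕ} (v : Mon (n + 2)) (hv : mdeg v = d)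
    (hLQ : ∀ σ : Fin (n + 2) → Fin (n + 2), Function.Bijective σ →
      LinQuot {u | mdeg u = d ∧ lexGE id u v} (rlexGT σ))
    (q : Fin (n + 2)) (hq0 : 0 < q.val) (hqn : q.val < n + 1) : v q ≤ 1 := by
  by_contra hq2
  push_neg at hq2  -- hq2 : 2 ≤ v q
  have hn1 : 1 ≤ n := by omega
  set G : Set (Mon (n + 2)) := {u | mdeg u = d ∧ lexGE id u v} with hGdef
  set L : Fin (n + 2) := ⟨n + 1, by omega⟩ with hL
  set nn : Fin (n + 2) := ⟨n, by omega⟩ with hnn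
  have h0L : (0 : Fin (n + 2)) ≠ L := by simp [hL, Fin.ext_iff]
  have h0q : (0 : Fin (n + 2)) ≠ q := by simp [Fin.ext_iff]; omega
  have hqL : q ≠ L := by simp [hL, Fin.ext_iff]; omega
  have h0nn : (0 : Fin (n + 2)) ≠ nn := by simp [hnn, Fin.ext_iff]; omega
  have hnnL : nn ≠ L := by simp [hnn, hL, Fin.ext_iff]
  set u : Mon (n + 2) := fun l =>
    v l + (if l = 0 then 1 else 0) + (if l = L then 1 else 0)
      - (if l = q then 2 else 0) with hu
  have hu0 : u 0 = v 0 + 1 := by simp [hu, h0L, h0q]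
  have huq : u q = v q - 2 := by simp [hu, Ne.symm h0q, hqL]
  have huL : u L = v L + 1 := by simp [hu, Ne.symm h0L, Ne.symm hqL]
  have huv : ∀ l, l ≠ 0 → l ≠ q → l ≠ L → u l = v l := by
    intro l h1 h2 h3; simp [hu, h1, h2, h3]
  have hud : mdeg u = d := by
    have := sum_shift2 u v q q 0 L 2 0 1 1 (fun l => by
      rcases eq_or_ne l 0 with rfl | h1
      · simp [hu0, h0q, h0L]
      · rcases eq_or_ne l q with rfl | h2
        · simp [huq, Ne.symm h0q, hqL]; omega
        · rcases eq_or_ne l L with rfl | h3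
          · simp [huL, Ne.symm h0L, Ne.symm hqL]
          · simp [huv l h1 h2 h3, h1, h2, h3])
    omega
  have huG : u ∈ G := by
    refine ⟨hud, Or.inr ⟨0, ?_, fun k hk => absurd hk (by simp)⟩⟩
    simp only [id_eq, hu0]; omega
  have hvG : v ∈ G := ⟨hv, Or.inl rfl⟩
  set σ : Equiv.Perm (Fin (n + 2)) := (Equiv.swap L 0).trans (Equiv.swap nn q) with hσ
  have hσL : σ L = 0 := by
    simp [hσ, Equiv.swap_apply_left, Equiv.swap_apply_of_ne_of_ne h0nn h0q]
  have hσnn : σ nn = q := by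
    simp [hσ, Equiv.swap_apply_of_ne_of_ne hnnL (Ne.symm h0nn), Equiv.swap_apply_left]
  have hrlex : rlexGT σ v u := by
    refine ⟨L, ?_, fun k hk => absurd hk ?_⟩
    · rw [hσL, hu0]; omega
    · have hk2 := k.isLt; simp [hL, Fin.lt_def]; omega
  obtain ⟨i0, hi0lt, m, hmG, hrm, hml⟩ := hLQ σ σ.bijective u huG v hvG hrlex
  have hi0q : i0 = q := by
    by_contra hne
    by_cases h1 : i0 = 0
    · subst h1; omega
    · by_cases h3 : i0 = L
      · subst h3; omega
      · rw [huv i0 h1 hne h3] at hi0lt; omega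
  rw [hi0q] at hml
  obtain ⟨p0, hp0, hp0tail⟩ := hrm
  have hmd : mdeg m = d := hmG.1
  obtain ⟨j, hj⟩ := exists_gt_of_mdeg_eq (a := u) (b := m) (by omega) hp0
  have hjq : j = q := by
    by_contra hne
    have := hml j
    simp [hne] at this
    omega
  rw [hjq] at hj
  have hmq : m q = u q + 1 := by have := hml q; simp at this; omega
  have hmquq : m q ≠ u q := by omega
  have hp0nn : nn < p0 := by
    rcases lt_trichotomy p0 nn with h | h | h
    · have := hp0tail nn h; rw [hσnn] at this; exact absurd this hmquq
    · subst h; rw [hσnn] at hp0; omega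
    · exact h
  have hp0L : p0 = L := by
    apply Fin.ext
    have h1 := p0.isLt
    rw [Fin.lt_def] at hp0nn
    simp [hnn] at hp0nn
    simp [hL]
    omega
  subst hp0L
  rw [hσL, hu0] at hp0
  have hm0 : m 0 ≤ v 0 := by omega
  have hmqv : m q = v q - 1 := by omega
  rcases hmG.2 with heq | ⟨t, hvt, hpre⟩
  · rw [heq] at hmqv; omega
  · simp only [id_eq] at hvt hpre
    by_cases ht0 : t = 0
    · subst ht0; omega
    · by_cases htq : t = q
      · subst htq; omega
      · by_cases htL : t = L
        · subst htL
          have := hpre q (by simp [hL, Fin.lt_def]; omega)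
          omega
        · have h1 := hml t
          simp [htq] at h1
          rw [huv t ht0 htq htL] at h1
          omega


set_option maxHeartbeats 2000000 in
lemma part2 {n d : ℕ} (v : Mon (n + 2)) (hv : mdeg v = d)
    (hLQ : ∀ σ : Fin (n + 2) → Fin (n + 2), Function.Bijective σ →
      LinQuot {u | mdeg u = d ∧ lexGE id u v} (rlexGT σ))
    (q1 q2 : Fin (n + 2)) (h10 : 0 < q1.val) (h12 : q1.val < q2.val)
    (h2n : q2.val < n + 1) (hv1 : v q1 = 1) (hv2 : v q2 = 1) : False := by
  have hn2 : 2 ≤ n := by omega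
  set G : Set (Mon (n + 2)) := {u | mdeg u = d ∧ lexGE id u v} with hGdef
  set L : Fin (n + 2) := ⟨n + 1, by omega⟩ with hL
  set nn : Fin (n + 2) := ⟨n, by omega⟩ with hnn
  set nm : Fin (n + 2) := ⟨n - 1, by omega⟩ with hnm
  have h0L : (0 : Fin (n + 2)) ≠ L := by simp [hL, Fin.ext_iff]; try omega
  have h0q1 : (0 : Fin (n + 2)) ≠ q1 := by simp [Fin.ext_iff]; try omega
  have h0q2 : (0 : Fin (n + 2)) ≠ q2 := by simp [Fin.ext_iff]; try omega
  have hq1q2 : q1 ≠ q2 := by simp [Fin.ext_iff]; try omega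
  have hq1L : q1 ≠ L := by simp [hL, Fin.ext_iff]; try omega
  have hq2L : q2 ≠ L := by simp [hL, Fin.ext_iff]; try omega
  have h0nn : (0 : Fin (n + 2)) ≠ nn := by simp [hnn, Fin.ext_iff]; try omega
  have h0nm : (0 : Fin (n + 2)) ≠ nm := by simp [hnm, Fin.ext_iff]; try omega
  have hnmnn : nm ≠ nn := by simp [hnm, hnn, Fin.ext_iff]; try omega
  have hnmL : nm ≠ L := by simp [hnm, hL, Fin.ext_iff]; try omega
  have hnnL : nn ≠ L := by simp [hnn, hL, Fin.ext_iff]; try omega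
  have hq1val : q1.val < L.val := by simp [hL]; omega
  have hq2val : q2.val < L.val := by simp [hL]; omega
  set u : Mon (n + 2) := fun l =>
    v l + (if l = 0 then 1 else 0) + (if l = L then 1 else 0)
      - (if l = q1 then 1 else 0) - (if l = q2 then 1 else 0) with hu
  have hu0 : u 0 = v 0 + 1 := by simp [hu, h0L, h0q1, h0q2]
  have huq1 : u q1 = 0 := by
    simp [hu, Ne.symm h0q1, hq1q2, hq1L, hv1]; try omega
  have huq2 : u q2 = 0 := by
    simp [hu, Ne.symm h0q2, Ne.symm hq1q2, hq2L, hv2]; try omega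
  have huL : u L = v L + 1 := by
    simp [hu, Ne.symm h0L, Ne.symm hq1L, Ne.symm hq2L]
  have huv : ∀ l, l ≠ 0 → l ≠ q1 → l ≠ q2 → l ≠ L → u l = v l := by
    intro l h1 h2 h3 h4; simp [hu, h1, h2, h3, h4]
  have hud : mdeg u = d := by
    have := sum_shift2 u v q1 q2 0 L 1 1 1 1 (fun l => by
      rcases eq_or_ne l 0 with rfl | h1
      · simp [hu0, h0q1, h0q2, h0L]
      · rcases eq_or_ne l q1 with rfl | h2
        · simp [huq1, Ne.symm h0q1, hq1q2, hq1L, hv1]; try omega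
        · rcases eq_or_ne l q2 with rfl | h3
          · simp [huq2, Ne.symm h0q2, Ne.symm hq1q2, hq2L, hv2]; try omega
          · rcases eq_or_ne l L with rfl | h4
            · simp [huL, Ne.symm h0L, Ne.symm hq1L, Ne.symm hq2L]
            · simp [huv l h1 h2 h3 h4, h1, h2, h3, h4])
    omega
  have huG : u ∈ G := by
    refine ⟨hud, Or.inr ⟨0, ?_, fun k hk => absurd hk (by simp)⟩⟩
    simp only [id_eq, hu0]; omega
  have hvG : v ∈ G := ⟨hv, Or.inl rfl⟩
  set c : Fin (n + 2) := (Equiv.swap nn q2) nm with hc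
  have hcv : (c.val = n - 1 ∧ q2.val ≠ n - 1) ∨ (c.val = n ∧ q2.val = n - 1) := by
    rcases eq_or_ne nm q2 with h | h
    · right
      constructor
      · rw [hc, h, Equiv.swap_apply_right, hnn]
      · rw [← h, hnm]
    · left
      constructor
      · rw [hc, Equiv.swap_apply_of_ne_of_ne hnmnn h, hnm]
      · intro h2
        exact h (Fin.ext (show nm.val = q2.val by simp [hnm, h2]))
  have hc0 : (0 : Fin (n + 2)) ≠ c := by
    apply Ne.symm; apply Fin.ne_of_val_ne; simp only [Fin.val_zero]; omega
  have hcq2 : q2 ≠ c := by apply Fin.ne_of_val_ne; omega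
  set σ : Equiv.Perm (Fin (n + 2)) :=
    ((Equiv.swap L 0).trans (Equiv.swap nn q2)).trans (Equiv.swap c q1) with hσ
  have hσL : σ L = 0 := by
    simp [hσ, Equiv.swap_apply_left,
      Equiv.swap_apply_of_ne_of_ne h0nn h0q2,
      Equiv.swap_apply_of_ne_of_ne hc0 h0q1]
  have hσnn : σ nn = q2 := by
    simp [hσ, Equiv.swap_apply_of_ne_of_ne hnnL (Ne.symm h0nn),
      Equiv.swap_apply_left,
      Equiv.swap_apply_of_ne_of_ne hcq2 (Ne.symm hq1q2)]
  have hσnm : σ nm = q1 := by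
    rw [hσ]
    simp only [Equiv.trans_apply]
    rw [Equiv.swap_apply_of_ne_of_ne hnmL (Ne.symm h0nm), ← hc,
      Equiv.swap_apply_left]
  have hrlex : rlexGT σ v u := by
    refine ⟨L, ?_, fun k hk => absurd hk ?_⟩
    · rw [hσL, hu0]; omega
    · have hk2 := k.isLt; simp [hL, Fin.lt_def]; omega
  obtain ⟨i0, hi0lt, m, hmG, hrm, hml⟩ := hLQ σ σ.bijective u huG v hvG hrlex
  have hmd : mdeg m = d := hmG.1
  have hi0q : i0 = q1 ∨ i0 = q2 := by
    by_contra hne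
    push_neg at hne
    by_cases h1 : i0 = 0
    · subst h1; omega
    · by_cases h4 : i0 = L
      · subst h4; omega
      · rw [huv i0 h1 hne.1 hne.2 h4] at hi0lt; omega
  obtain ⟨p0, hp0, hp0tail⟩ := hrm
  obtain ⟨j, hj⟩ := exists_gt_of_mdeg_eq (a := u) (b := m) (by omega) hp0
  have hji0 : j = i0 := by
    by_contra hne
    have := hml j
    simp [hne] at this
    omega
  rw [hji0] at hj
  have hmi0 : m i0 = u i0 + 1 := by have := hml i0; simp at this; omega
  rcases hi0q with hi0 | hi0
  · -- i0 = q1, σ nm = q1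
    rw [hi0] at hml hmi0 hj hi0lt
    have hmq1 : m q1 = 1 := by rw [hmi0, huq1]
    have hmq2 : m q2 = 0 := by
      have := hml q2; simp [Ne.symm hq1q2, huq2] at this; omega
    have hp0val : p0 = L := by
      have h1 : ¬ p0 < nm := by
        intro h
        have := hp0tail nm h
        rw [hσnm] at this
        omega
      have h2 : p0 ≠ nm := by
        intro h; rw [← h] at hσnm; rw [hσnm] at hp0; omega
      have h3 : p0 ≠ nn := by
        intro h; rw [← h] at hσnn; rw [hσnn, huq2] at hp0; omega
      apply Fin.ext
      have hlt := p0.isLt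
      rw [Fin.lt_def] at h1
      simp [hnm] at h1
      have h2' : (p0 : ℕ) ≠ n - 1 := fun hh => h2 (Fin.ext (by simp [hnm]; exact hh))
      have h3' : (p0 : ℕ) ≠ n := fun hh => h3 (Fin.ext (by simp [hnn]; exact hh))
      simp [hL]; omega
    rw [hp0val, hσL, hu0] at hp0
    have hm0 : m 0 ≤ v 0 := by omega
    rcases hmG.2 with heq | ⟨t, hvt, hpre⟩
    · rw [heq] at hmq2; omega
    · simp only [id_eq] at hvt hpre
      by_cases ht0 : t = 0
      · subst ht0; omega
      · by_cases ht1 : t = q1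
        · subst ht1; omega
        · by_cases ht2 : t = q2
          · subst ht2; omega
          · by_cases htL : t = L
            · subst htL
              have := hpre q2 (by rw [Fin.lt_def]; exact hq2val)
              omega
            · have h1 := hml t
              simp [ht1] at h1
              rw [huv t ht0 ht1 ht2 htL] at h1
              omega
  · -- i0 = q2, σ nn = q2
    rw [hi0] at hml hmi0 hj hi0lt
    have hmq2 : m q2 = 1 := by rw [hmi0, huq2]
    have hmq1 : m q1 = 0 := by
      have := hml q1; simp [hq1q2, huq1] at this; omega
    have hp0val : p0 = L := by
      have h1 : ¬ p0 < nn := by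
        intro h
        have := hp0tail nn h
        rw [hσnn] at this
        omega
      have h2 : p0 ≠ nn := by
        intro h; rw [← h] at hσnn; rw [hσnn] at hp0; omega
      apply Fin.ext
      have hlt := p0.isLt
      rw [Fin.lt_def] at h1
      simp [hnn] at h1
      have h2' : (p0 : ℕ) ≠ n := fun hh => h2 (Fin.ext (by simp [hnn]; exact hh))
      simp [hL]; omega
    rw [hp0val, hσL, hu0] at hp0
    have hm0 : m 0 ≤ v 0 := by omega
    rcases hmG.2 with heq | ⟨t, hvt, hpre⟩
    · rw [heq] at hmq1; omega
    · simp only [id_eq] at hvt hpre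
      by_cases ht0 : t = 0
      · subst ht0; omega
      · by_cases ht1 : t = q1
        · subst ht1; omega
        · by_cases ht2 : t = q2
          · subst ht2; omega
          · by_cases htL : t = L
            · subst htL
              have := hpre q1 (by rw [Fin.lt_def]; exact hq1val)
              omega
            · have h1 := hml t
              simp [ht2] at h1
              rw [huv t ht0 ht1 ht2 htL] at h1
              omega



end Helpers

set_option maxHeartbeats 2000000 in
/-- If the initial lexsegment ideal `I = (u ∈ M_d : u ≥_lex v)` has linear quotients
with respect to the reverse lexicographic ordering of the minimal generators induced by
every ordering of the variables, then `I` is polymatroidal. -/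
theorem stmt_8 {n d : ℕ} (v : Mon (n + 2)) (hv : mdeg v = d)
    (G : Set (Mon (n + 2))) (hG : G = {u | mdeg u = d ∧ lexGE id u v})
    (hLQ : ∀ σ : Fin (n + 2) → Fin (n + 2), Function.Bijective σ →
      LinQuot G (rlexGT σ)) :
    IsPolymatroidal G := by
  subst hG
  have good1 : ∀ q : Fin (n + 2), 0 < q.val → q.val < n + 1 → v q ≤ 1 :=
    part1 v hv hLQ
  have good2 : ∀ q1 q2 : Fin (n + 2), 0 < q1.val → q1.val < q2.val →
      q2.val < n + 1 → v q1 = 0 ∨ v q2 = 0 := by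
    intro q1 q2 a b c
    by_contra hcon
    push_neg at hcon
    have h1 := good1 q1 a (by omega)
    have h2 := good1 q2 (by omega) c
    exact part2 v hv hLQ q1 q2 a b c (by omega) (by omega)
  intro u hu w hw i hwi
  obtain ⟨hud, hul⟩ := hu
  obtain ⟨hwd, hwl⟩ := hw
  have hui1 : 1 ≤ u i := by omega
  have hdeq : mdeg u = mdeg w := by rw [hud, hwd]
  have finish : ∀ j, u j < w j → lexGE id (exch u i j) v →
      ∃ j, u j < w j ∧ memI {u | mdeg u = d ∧ lexGE id u v} (exch u i j) := by
    intro j hj hle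
    have hij : i ≠ j := by intro h; rw [← h] at hj; omega
    exact ⟨j, hj, ⟨exch u i j, ⟨by rw [mdeg_exch u i j hij hui1, hud], hle⟩,
      fun l => le_rfl⟩⟩
  obtain ⟨j0, hj0⟩ : ∃ j, u j < w j := exists_gt_of_mdeg_eq hdeq hwi
  by_cases hc1 : ∃ j, u j < w j ∧ j < i
  · -- Case 1: some exchange index below i
    obtain ⟨j, hj, hji⟩ := hc1
    have hjine : j ≠ i := ne_of_lt hji
    apply finish j hj
    right
    rcases hul with heq | ⟨p, hp, hppre⟩
    · refine ⟨j, ?_, ?_⟩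
      · simp only [id_eq, exch_at_j u (Ne.symm hjine)]
        rw [heq]; omega
      · intro k hk
        simp only [id_eq]
        rw [exch_at_other u (ne_of_lt (lt_trans hk hji)) (ne_of_lt hk), heq]
    · simp only [id_eq] at hp hppre
      rcases lt_or_ge p j with h | h
      · refine ⟨p, ?_, ?_⟩
        · simp only [id_eq]
          rw [exch_at_other u (ne_of_lt (lt_trans h hji)) (ne_of_lt h)]
          exact hp
        · intro k hk
          simp only [id_eq]
          rw [exch_at_other u (ne_of_lt (lt_trans (lt_trans hk h) hji))
            (ne_of_lt (lt_trans hk h)), hppre k hk]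
      · have hujvj : v j ≤ u j := by
          rcases eq_or_lt_of_le h with h2 | h2
          · rw [h2]; exact le_of_lt hp
          · exact le_of_eq (hppre j h2).symm
        refine ⟨j, ?_, ?_⟩
        · simp only [id_eq, exch_at_j u (Ne.symm hjine)]; omega
        · intro k hk
          simp only [id_eq]
          rw [exch_at_other u (ne_of_lt (lt_trans hk hji)) (ne_of_lt hk),
            hppre k (lt_of_lt_of_le hk h)]
  · -- Case 2
    push_neg at hc1
    have hij0 : i < j0 := by
      rcases eq_or_lt_of_le (hc1 j0 hj0) with h | h
      · rw [← h] at hj0; omega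
      · exact h
    by_cases hc2 : ∃ l, l < i ∧ u l ≠ v l
    · -- Case 2a
      obtain ⟨r, ⟨hr_lt, hr_ne⟩, hrmin⟩ := exists_min _ hc2
      have hurv : v r < u r := by
        rcases hul with heq | ⟨p, hp, hppre⟩
        · rw [heq] at hr_ne; exact absurd rfl hr_ne
        · simp only [id_eq] at hp hppre
          rcases lt_trichotomy p r with h | h | h
          · exact absurd ⟨lt_trans h hr_lt, by omega⟩ (hrmin p h)
          · rw [← h]; rw [← h] at hr_ne; exact hp
          · exact absurd (hppre r h) hr_ne
      apply finish j0 hj0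
      right
      refine ⟨r, ?_, ?_⟩
      · simp only [id_eq]
        rw [exch_at_other u (ne_of_lt hr_lt) (ne_of_lt (lt_trans hr_lt hij0))]
        exact hurv
      · intro k hk
        simp only [id_eq]
        have hk_i : k < i := lt_trans hk hr_lt
        rw [exch_at_other u (ne_of_lt hk_i) (ne_of_lt (lt_trans hk_i hij0))]
        by_contra hne
        exact (hrmin k hk) ⟨hk_i, hne⟩
    · -- Case 2b
      push_neg at hc2
      have hwv : ∀ l, l < i → w l = v l := by
        by_contra hcc
        push_neg at hcc
        obtain ⟨s, ⟨hs_lt, hs_ne⟩, hsmin⟩ := exists_min _ hcc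
        have hws : w s ≤ v s := by
          by_contra hgt
          push_neg at hgt
          have : u s < w s := by rw [hc2 s hs_lt]; exact hgt
          exact absurd (hc1 s this) (not_le.mpr hs_lt)
        rcases hwl with heq | ⟨s2, hp2, hpre2⟩
        · rw [heq] at hs_ne; exact hs_ne rfl
        · simp only [id_eq] at hp2 hpre2
          rcases lt_trichotomy s2 s with h | h | h
          · exact (hsmin s2 h) ⟨lt_trans h hs_lt, by omega⟩
          · rw [h] at hp2; omega
          · exact hs_ne (hpre2 s h)
      have hwi_ge : v i ≤ w i := by
        rcases hwl with heq | ⟨s2, hp2, hpre2⟩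
        · rw [heq]
        · simp only [id_eq] at hp2 hpre2
          rcases lt_trichotomy s2 i with h | h | h
          · have := hwv s2 h; omega
          · rw [h] at hp2; omega
          · rw [hpre2 i h]
      have hui_gt : v i < u i := by omega
      by_cases hc3 : v i + 2 ≤ u i
      · -- 2b-i
        apply finish j0 hj0
        right
        refine ⟨i, ?_, ?_⟩
        · simp only [id_eq, exch_at_i u (ne_of_lt hij0)]; omega
        · intro k hk
          simp only [id_eq]
          rw [exch_at_other u (ne_of_lt hk) (ne_of_lt (lt_trans hk hij0)),
            hc2 k hk]
      · have hui_eq : u i = v i + 1 := by omega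
        have hwi_eq : w i = v i := by omega
        have hq_ex : ∃ l, i < l ∧ u l ≠ v l := by
          by_contra hcc
          push_neg at hcc
          have hsum := sum_shift2 u v i i i i 0 0 1 0 (fun l => by
            rcases lt_trichotomy l i with h | h | h
            · simp [hc2 l h, ne_of_lt h]
            · rw [h]; simp [hui_eq]
            · simp [hcc l h, ne_of_gt h])
          omega
        obtain ⟨q, ⟨hiq, hq_ne⟩, hqmin⟩ := exists_min _ hq_ex
        have hq_mid : ∀ l, i < l → l < q → u l = v l := by
          intro l h1 h2
          by_contra hne
          exact (hqmin l h2) ⟨h1, hne⟩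
        have hqi : q ≠ i := ne_of_gt hiq
        -- value of exch at k < q for any j > q-ish: helper
        rcases lt_or_gt_of_ne hq_ne with hB | hA
        · -- u q < v q
          by_cases hc4 : ∃ l, i < l ∧ l < q ∧ w l ≠ v l
          · obtain ⟨s, ⟨h1, h2, h3⟩, hsmin⟩ := exists_min _ hc4
            have hsv : v s < w s := by
              rcases hwl with heq | ⟨s2, hp2, hpre2⟩
              · rw [heq] at h3; exact absurd rfl h3
              · simp only [id_eq] at hp2 hpre2
                rcases lt_trichotomy s2 s with h | h | h
                · rcases lt_trichotomy s2 i with hh | hh | hh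
                  · rw [hwv s2 hh] at hp2; omega
                  · rw [hh, hwi_eq] at hp2; omega
                  · exact absurd ⟨hh, lt_trans h h2, by omega⟩ (hsmin s2 h)
                · rw [h] at hp2; exact hp2
                · rw [hpre2 s h] at h3; exact absurd rfl h3
            have hus : u s < w s := by rw [hq_mid s h1 h2]; exact hsv
            apply finish s hus
            right
            refine ⟨s, ?_, ?_⟩
            · simp only [id_eq, exch_at_j u (ne_of_lt h1)]
              rw [hq_mid s h1 h2]; omega
            · intro k hk
              simp only [id_eq]
              rcases lt_trichotomy k i with hh | hh | hh
              · rw [exch_at_other u (ne_of_lt hh) (ne_of_lt hk)]; exact hc2 k hh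
              · rw [hh, exch_at_i u (ne_of_lt h1)]; omega
              · rw [exch_at_other u (ne_of_gt hh) (ne_of_lt hk)]
                exact hq_mid k hh (lt_trans hk h2)
          · push_neg at hc4
            have hwq : v q ≤ w q := by
              rcases hwl with heq | ⟨s2, hp2, hpre2⟩
              · rw [heq]
              · simp only [id_eq] at hp2 hpre2
                rcases lt_trichotomy s2 q with h | h | h
                · rcases lt_trichotomy s2 i with hh | hh | hh
                  · rw [hwv s2 hh] at hp2; omega
                  · rw [hh, hwi_eq] at hp2; omega
                  · rw [hc4 s2 hh h] at hp2; omega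
                · rw [h] at hp2; exact le_of_lt hp2
                · rw [hpre2 q h]
            have hjq : u q < w q := by omega
            apply finish q hjq
            by_cases hqL : q.val = n + 1
            · -- q is the last variable
              have hnot : ∀ l : Fin (n + 2), ¬ q < l := by
                intro l hl
                have := l.isLt
                rw [Fin.lt_def] at hl
                omega
              have hsum := sum_shift2 u v q q i i (v q - u q) 0 1 0 (fun l => by
                rcases lt_trichotomy l q with h | h | h
                · rcases lt_trichotomy l i with hh | hh | hh
                  · rw [if_neg (ne_of_lt h), if_neg (ne_of_lt h),
                      if_neg (ne_of_lt hh), if_neg (ne_of_lt hh), hc2 l hh]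
                  · rw [hh, if_neg (ne_of_lt hiq), if_neg (ne_of_lt hiq),
                      if_pos rfl, if_pos rfl, hui_eq]
                  · rw [if_neg (ne_of_lt h), if_neg (ne_of_lt h),
                      if_neg (ne_of_gt hh), if_neg (ne_of_gt hh), hq_mid l hh h]
                · rw [h, if_pos rfl, if_pos rfl, if_neg hqi, if_neg hqi]
                  omega
                · exact absurd h (hnot l))
              have huq1 : u q + 1 = v q := by omega
              left
              funext l
              rcases lt_trichotomy l q with h | h | h
              · rcases lt_trichotomy l i with hh | hh | hh
                · rw [exch_at_other u (ne_of_lt hh) (ne_of_lt h)]; exact hc2 l hh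
                · rw [hh, exch_at_i u (ne_of_lt hiq)]; omega
                · rw [exch_at_other u (ne_of_gt hh) (ne_of_lt h)]; exact hq_mid l hh h
              · rw [h, exch_at_j u (ne_of_lt hiq)]; omega
              · exact absurd h (hnot l)
            · -- q is a middle variable
              have hq_pos : 0 < q.val := by
                rw [Fin.lt_def] at hiq; omega
              have hvq1 : v q = 1 := by
                have := good1 q hq_pos (by have := q.isLt; omega)
                omega
              have huq0 : u q = 0 := by omega
              by_cases hc5 : ∃ l, q < l ∧ u l ≠ v l
              · obtain ⟨t, ⟨ht1, ht2⟩, htmin⟩ := exists_min _ hc5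
                rcases lt_or_gt_of_ne ht2 with hlt | hgt
                · -- u t < v t : impossible
                  exfalso
                  by_cases htL : t.val = n + 1
                  · have hnot : ∀ l : Fin (n + 2), ¬ t < l := by
                      intro l hl
                      have := l.isLt
                      rw [Fin.lt_def] at hl
                      omega
                    have hsum := sum_shift2 u v q t i i 1 (v t - u t) 1 0 (fun l => by
                      rcases lt_trichotomy l t with h | h | h
                      · rcases lt_trichotomy l q with h2 | h2 | h2
                        · rcases lt_trichotomy l i with hh | hh | hh
                          · simp [ne_of_lt h, ne_of_lt h2, ne_of_lt hh, hc2 l hh]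
                          · rw [hh]
                            simp [ne_of_lt hiq, ne_of_lt (lt_trans hiq ht1), hui_eq]
                          · simp [ne_of_lt h2, ne_of_lt h, ne_of_gt hh,
                              hq_mid l hh h2]
                        · rw [h2]
                          simp [hqi, ne_of_lt ht1, huq0, hvq1]
                        · have hul2 : u l = v l := by
                            by_contra hne
                            exact (htmin l h) ⟨h2, hne⟩
                          simp [ne_of_gt h2, ne_of_lt h,
                            ne_of_gt (lt_trans hiq h2), hul2]
                      · rw [h]
                        simp [ne_of_gt ht1, ne_of_gt (lt_trans hiq ht1)]
                        omega
                      · exact absurd h (hnot l))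
                    omega
                  · have := good2 q t hq_pos (by rw [Fin.lt_def] at ht1; exact ht1)
                      (by have := t.isLt; omega)
                    rcases this with h | h <;> omega
                · -- u t > v t : lex witness t
                  right
                  refine ⟨t, ?_, ?_⟩
                  · simp only [id_eq]
                    rw [exch_at_other u (ne_of_gt (lt_trans hiq ht1)) (ne_of_gt ht1)]
                    exact hgt
                  · intro k hk
                    simp only [id_eq]
                    rcases lt_trichotomy k q with h2 | h2 | h2
                    · rcases lt_trichotomy k i with hh | hh | hh
                      · rw [exch_at_other u (ne_of_lt hh) (ne_of_lt h2)]
                        exact hc2 k hh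
                      · rw [hh, exch_at_i u (ne_of_lt hiq)]; omega
                      · rw [exch_at_other u (ne_of_gt hh) (ne_of_lt h2)]
                        exact hq_mid k hh h2
                    · rw [h2, exch_at_j u (ne_of_lt hiq)]; omega
                    · rw [exch_at_other u (ne_of_gt (lt_trans hiq h2)) (ne_of_gt h2)]
                      by_contra hne
                      exact (htmin k hk) ⟨h2, hne⟩
              · -- u agrees with v beyond q : exch u i q = v
                push_neg at hc5
                left
                funext l
                rcases lt_trichotomy l q with h2 | h2 | h2
                · rcases lt_trichotomy l i with hh | hh | hh
                  · rw [exch_at_other u (ne_of_lt hh) (ne_of_lt h2)]; exact hc2 l hh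
                  · rw [hh, exch_at_i u (ne_of_lt hiq)]; omega
                  · rw [exch_at_other u (ne_of_gt hh) (ne_of_lt h2)]
                    exact hq_mid l hh h2
                · rw [h2, exch_at_j u (ne_of_lt hiq)]; omega
                · rw [exch_at_other u (ne_of_gt (lt_trans hiq h2)) (ne_of_gt h2)]
                  exact hc5 l h2
        · -- u q > v q : any j0
          apply finish j0 hj0
          right
          rcases lt_trichotomy j0 q with h | h | h
          · refine ⟨j0, ?_, ?_⟩
            · simp only [id_eq, exch_at_j u (ne_of_lt hij0)]
              rw [hq_mid j0 hij0 h]; omega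
            · intro k hk
              simp only [id_eq]
              rcases lt_trichotomy k i with hh | hh | hh
              · rw [exch_at_other u (ne_of_lt hh) (ne_of_lt hk), hc2 k hh]
              · rw [hh, exch_at_i u (ne_of_lt hij0), hui_eq]; omega
              · rw [exch_at_other u (ne_of_gt hh) (ne_of_lt hk),
                  hq_mid k hh (lt_trans hk h)]
          · refine ⟨q, ?_, ?_⟩
            · rw [← h]
              simp only [id_eq, exch_at_j u (ne_of_lt hij0)]
              rw [h] at *; omega
            · intro k hk
              simp only [id_eq]
              rw [← h] at hk
              rcases lt_trichotomy k i with hh | hh | hh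
              · rw [exch_at_other u (ne_of_lt hh) (ne_of_lt hk), hc2 k hh]
              · rw [hh, exch_at_i u (ne_of_lt hij0), hui_eq]; omega
              · rw [exch_at_other u (ne_of_gt hh) (ne_of_lt hk),
                  hq_mid k hh (h ▸ hk)]
          · refine ⟨q, ?_, ?_⟩
            · simp only [id_eq]
              rw [exch_at_other u hqi (ne_of_lt h)]
              exact hA
            · intro k hk
              simp only [id_eq]
              rcases lt_trichotomy k i with hh | hh | hh
              · rw [exch_at_other u (ne_of_lt hh)
                  (ne_of_lt (lt_trans hk h)), hc2 k hh]
              · rw [hh, exch_at_i u (ne_of_lt hij0), hui_eq]; omega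
              · rw [exch_at_other u (ne_of_gt hh) (ne_of_lt (lt_trans hk h)),
                  hq_mid k hh hk]
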